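/- The function u(x,y,z,t) = (x²+y²)² + 16z² + 12(x²+y²)t + 12t² satisfies, at every point (p,t) ∈ ℍ × ℝ, the identity ∂_t u · |∇_H u|² = Δ_H u · |∇_H u|² − ⟨(∇_H²u)* ∇_H u, ∇_H u⟩; consequently, at every point where ∇_H u ≠ 0, u is a classical solution of the level-set horizontal mean curvature flow equation u_t = |∇_H u| · div_H(∇_H u / |∇_H u|). -/

import Mathlib

/-!
For any `f` whose horizontal gradient does not vanish at `p`, the quotient rule gives
`|∇_H f| div_H (∇_H f / |∇_H f|) = Δ_H f - ⟨(∇_H² f)* ∇_H f, ∇_H f⟩ / |∇_H f|²`,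
so the divergence form of the flow equation follows from the non-divergence identity.
For `u` that identity is a polynomial computation:
`X₁²u = X₂²u = u_t = 12(x² + y²) + 24t` and `X₁X₂u = -X₂X₁u = 16z`,
so the symmetrized horizontal Hessian is `u_t` times the identity.
-/

noncomputable section

/-- The Heisenberg group as a set: `ℝ³` with coordinates `(x, y, z)`. -/
abbrev Heis : Type := ℝ × ℝ × ℝ

/-- The Heisenberg group multiplication. -/
def Hmul (p q : Heis) : Heis :=
  (p.1 + q.1, p.2.1 + q.2.1, p.2.2 + q.2.2 + (p.1 * q.2.1 - q.1 * p.2.1) / 2)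

/-- The Heisenberg group inverse. -/
def Hinv (p : Heis) : Heis := (-p.1, -p.2.1, -p.2.2)

/-- The Korányi gauge `|p|_G = ((x² + y²)² + 16 z²)^(1/4)`. -/
def kGauge (p : Heis) : ℝ := ((p.1 ^ 2 + p.2.1 ^ 2) ^ 2 + 16 * p.2.2 ^ 2) ^ ((1 : ℝ) / 4)

/-- The left-invariant gauge metric `d_L(p,q) = |p⁻¹·q|_G`. -/
def dL (p q : Heis) : ℝ := kGauge (Hmul (Hinv p) q)

/-- The right-invariant gauge metric `d_R(p,q) = |p·q⁻¹|_G`. -/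
def dR (p q : Heis) : ℝ := kGauge (Hmul p (Hinv q))

/-- The horizontal vector field `X₁ = ∂ₓ - (y/2)∂_z` applied to `f` at `p`. -/
def X1 (f : Heis → ℝ) (p : Heis) : ℝ := fderiv ℝ f p (1, 0, -p.2.1 / 2)

/-- The horizontal vector field `X₂ = ∂_y + (x/2)∂_z` applied to `f` at `p`. -/
def X2 (f : Heis → ℝ) (p : Heis) : ℝ := fderiv ℝ f p (0, 1, p.1 / 2)

/-- The horizontal Laplacian `Δ_H f = X₁(X₁ f) + X₂(X₂ f)`. -/
def deltaH (f : Heis → ℝ) (p : Heis) : ℝ := X1 (X1 f) p + X2 (X2 f) p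

/-- The Euclidean norm of the horizontal gradient, `|∇_H f|`. -/
def gradNormH (f : Heis → ℝ) (p : Heis) : ℝ := Real.sqrt ((X1 f p) ^ 2 + (X2 f p) ^ 2)

/-- The horizontal divergence of the vector field `(F₁, F₂)`. -/
def divH (F₁ F₂ : Heis → ℝ) (p : Heis) : ℝ := X1 F₁ p + X2 F₂ p

/-- The function `u(x,y,z,t) = (x²+y²)² + 16z² + 12(x²+y²)t + 12t²`. -/
def u16 (p : Heis) (t : ℝ) : ℝ :=
  (p.1 ^ 2 + p.2.1 ^ 2) ^ 2 + 16 * p.2.2 ^ 2 + 12 * (p.1 ^ 2 + p.2.1 ^ 2) * t + 12 * t ^ 2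

/-- `u16(·,t)` viewed as a function of the space variable. -/
def v16 (t : ℝ) (q : Heis) : ℝ := u16 q t

section Coordinates

variable {𝕜 E F G : Type*} [NontriviallyNormedField 𝕜] [NormedAddCommGroup E] [NormedSpace 𝕜 E]
  [NormedAddCommGroup F] [NormedSpace 𝕜 F] [NormedAddCommGroup G] [NormedSpace 𝕜 G]

@[simp]
lemma fderiv_snd_fst_apply (p v : E × F × G) :
    fderiv 𝕜 (fun q : E × F × G => q.2.1) p v = v.2.1 := by
  rw [hasFDerivAt_snd.fst.fderiv]; rfl

@[simp]
lemma fderiv_snd_snd_apply (p v : E × F × G) :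
    fderiv 𝕜 (fun q : E × F × G => q.2.2) p v = v.2.2 := by
  rw [hasFDerivAt_snd.snd.fderiv]; rfl

end Coordinates

lemma fderiv_div_apply {𝕜 E : Type*} [NontriviallyNormedField 𝕜] [NormedAddCommGroup E]
    [NormedSpace 𝕜 E] {f g : E → 𝕜} {x : E} (hf : DifferentiableAt 𝕜 f x)
    (hg : DifferentiableAt 𝕜 g x) (hx : g x ≠ 0) (v : E) :
    fderiv 𝕜 (fun y => f y / g y) x v = (fderiv 𝕜 f x v * g x - f x * fderiv 𝕜 g x v) / g x ^ 2 := by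
  have hinv : HasFDerivAt (fun y => (g y)⁻¹) ((-(g x ^ 2)⁻¹) • fderiv 𝕜 g x) x :=
    (hasDerivAt_inv hx).comp_hasFDerivAt x hg.hasFDerivAt
  simp only [div_eq_mul_inv]
  rw [(hf.hasFDerivAt.fun_mul hinv).fderiv]
  simp only [add_apply, smul_apply, smul_eq_mul, neg_mul, mul_neg]
  field_simp
  ring

section HorizontalCalculus

variable {f g : Heis → ℝ} {p : Heis}

lemma X1_div (hf : DifferentiableAt ℝ f p) (hg : DifferentiableAt ℝ g p) (hp : g p ≠ 0) :
    X1 (fun q => f q / g q) p = (X1 f p * g p - f p * X1 g p) / g p ^ 2 :=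
  fderiv_div_apply hf hg hp _

lemma X2_div (hf : DifferentiableAt ℝ f p) (hg : DifferentiableAt ℝ g p) (hp : g p ≠ 0) :
    X2 (fun q => f q / g q) p = (X2 f p * g p - f p * X2 g p) / g p ^ 2 :=
  fderiv_div_apply hf hg hp _

lemma sq_add_sq_X1_X2_pos (hp : (X1 f p, X2 f p) ≠ (0, 0)) : 0 < X1 f p ^ 2 + X2 f p ^ 2 := by
  refine lt_of_le_of_ne (by positivity) fun h => hp ?_
  rw [sq, sq, eq_comm, mul_self_add_mul_self_eq_zero] at h
  rw [h.1, h.2]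

lemma gradNormH_ne_zero (hp : (X1 f p, X2 f p) ≠ (0, 0)) : gradNormH f p ≠ 0 :=
  (Real.sqrt_pos.2 (sq_add_sq_X1_X2_pos hp)).ne'

lemma sq_gradNormH : gradNormH f p ^ 2 = X1 f p ^ 2 + X2 f p ^ 2 :=
  Real.sq_sqrt (by positivity)

lemma differentiableAt_gradNormH (h1 : DifferentiableAt ℝ (X1 f) p)
    (h2 : DifferentiableAt ℝ (X2 f) p) (hp : (X1 f p, X2 f p) ≠ (0, 0)) :
    DifferentiableAt ℝ (gradNormH f) p :=
  ((h1.pow 2).add (h2.pow 2)).sqrt (sq_add_sq_X1_X2_pos hp).ne'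

lemma fderiv_gradNormH_apply (h1 : DifferentiableAt ℝ (X1 f) p)
    (h2 : DifferentiableAt ℝ (X2 f) p) (hp : (X1 f p, X2 f p) ≠ (0, 0)) (v : Heis) :
    fderiv ℝ (gradNormH f) p v
      = (X1 f p * fderiv ℝ (X1 f) p v + X2 f p * fderiv ℝ (X2 f) p v) / gradNormH f p := by
  change fderiv ℝ (fun q => √(X1 f q ^ 2 + X2 f q ^ 2)) p v = _
  rw [fderiv_sqrt (f := fun q => X1 f q ^ 2 + X2 f q ^ 2) (by fun_prop)
    (sq_add_sq_X1_X2_pos hp).ne']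
  simp (disch := fun_prop) only [fderiv_fun_add, fderiv_fun_pow, Nat.add_one_sub_one, pow_one,
    nsmul_eq_mul, Nat.cast_ofNat, add_apply, smul_apply, smul_eq_mul, gradNormH]
  field_simp

theorem gradNormH_mul_divH_normalized (h1 : DifferentiableAt ℝ (X1 f) p)
    (h2 : DifferentiableAt ℝ (X2 f) p) (hp : (X1 f p, X2 f p) ≠ (0, 0)) :
    gradNormH f p * divH (fun q => X1 f q / gradNormH f q) (fun q => X2 f q / gradNormH f q) p
      = deltaH f p - (X1 (X1 f) p * X1 f p ^ 2
          + (X1 (X2 f) p + X2 (X1 f) p) * X1 f p * X2 f p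
          + X2 (X2 f) p * X2 f p ^ 2) / (X1 f p ^ 2 + X2 f p ^ 2) := by
  have hN := differentiableAt_gradNormH h1 h2 hp
  have hN0 := gradNormH_ne_zero hp
  have e1 : X1 (gradNormH f) p
      = (X1 f p * X1 (X1 f) p + X2 f p * X1 (X2 f) p) / gradNormH f p :=
    fderiv_gradNormH_apply h1 h2 hp _
  have e2 : X2 (gradNormH f) p
      = (X1 f p * X2 (X1 f) p + X2 f p * X2 (X2 f) p) / gradNormH f p :=
    fderiv_gradNormH_apply h1 h2 hp _
  rw [divH, X1_div h1 hN hN0, X2_div h2 hN hN0, e1, e2, deltaH]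
  have hG := (sq_add_sq_X1_X2_pos hp).ne'
  field_simp
  rw [sq_gradNormH]
  ring

end HorizontalCalculus

section U16

variable (p : Heis) (t : ℝ)

lemma deriv_u16 : deriv (fun s : ℝ => u16 p s) t = 12 * (p.1 ^ 2 + p.2.1 ^ 2) + 24 * t := by
  unfold u16
  simp (disch := fun_prop) only [deriv_fun_add, deriv_fun_mul, deriv_fun_pow, deriv_const',
    deriv_const_mul_id', deriv_id'']
  ring

lemma X1_v16 : X1 (v16 t)
    = fun q => 4 * q.1 * (q.1 ^ 2 + q.2.1 ^ 2) + 24 * q.1 * t - 16 * q.2.1 * q.2.2 := by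
  ext q
  unfold X1 v16 u16
  simp (disch := fun_prop) only [fderiv_fun_add, fderiv_fun_mul, fderiv_fun_pow,
    fderiv_fun_const, fderiv_fst, fderiv_snd_fst_apply, fderiv_snd_snd_apply,
    add_apply, smul_apply, ContinuousLinearMap.coe_fst', Pi.zero_apply, zero_apply, smul_eq_mul]
  ring

lemma X2_v16 : X2 (v16 t)
    = fun q => 4 * q.2.1 * (q.1 ^ 2 + q.2.1 ^ 2) + 24 * q.2.1 * t + 16 * q.1 * q.2.2 := by
  ext q
  unfold X2 v16 u16
  simp (disch := fun_prop) only [fderiv_fun_add, fderiv_fun_mul, fderiv_fun_pow,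
    fderiv_fun_const, fderiv_fst, fderiv_snd_fst_apply, fderiv_snd_snd_apply,
    add_apply, smul_apply, ContinuousLinearMap.coe_fst', Pi.zero_apply, zero_apply, smul_eq_mul]
  ring

lemma X1_X1_v16 : X1 (X1 (v16 t)) p = 12 * (p.1 ^ 2 + p.2.1 ^ 2) + 24 * t := by
  rw [X1_v16, X1]
  simp (disch := fun_prop) only [fderiv_fun_add, fderiv_fun_sub, fderiv_fun_mul, fderiv_fun_pow,
    fderiv_fun_const, fderiv_fst, fderiv_snd_fst_apply, fderiv_snd_snd_apply,
    add_apply, sub_apply, smul_apply, ContinuousLinearMap.coe_fst', Pi.zero_apply, zero_apply,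
    smul_eq_mul]
  ring

lemma X2_X2_v16 : X2 (X2 (v16 t)) p = 12 * (p.1 ^ 2 + p.2.1 ^ 2) + 24 * t := by
  rw [X2_v16, X2]
  simp (disch := fun_prop) only [fderiv_fun_add, fderiv_fun_mul, fderiv_fun_pow,
    fderiv_fun_const, fderiv_fst, fderiv_snd_fst_apply, fderiv_snd_snd_apply,
    add_apply, smul_apply, ContinuousLinearMap.coe_fst', Pi.zero_apply, zero_apply, smul_eq_mul]
  ring

lemma X1_X2_v16 : X1 (X2 (v16 t)) p = 16 * p.2.2 := by
  rw [X2_v16, X1]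
  simp (disch := fun_prop) only [fderiv_fun_add, fderiv_fun_mul, fderiv_fun_pow,
    fderiv_fun_const, fderiv_fst, fderiv_snd_fst_apply, fderiv_snd_snd_apply,
    add_apply, smul_apply, ContinuousLinearMap.coe_fst', Pi.zero_apply, zero_apply, smul_eq_mul]
  ring

lemma X2_X1_v16 : X2 (X1 (v16 t)) p = -16 * p.2.2 := by
  rw [X1_v16, X2]
  simp (disch := fun_prop) only [fderiv_fun_add, fderiv_fun_sub, fderiv_fun_mul, fderiv_fun_pow,
    fderiv_fun_const, fderiv_fst, fderiv_snd_fst_apply, fderiv_snd_snd_apply,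
    add_apply, sub_apply, smul_apply, ContinuousLinearMap.coe_fst', Pi.zero_apply, zero_apply,
    smul_eq_mul]
  ring

lemma u16_solves_mcf_nondivergence :
    deriv (fun s : ℝ => u16 p s) t * ((X1 (v16 t) p) ^ 2 + (X2 (v16 t) p) ^ 2)
      = deltaH (v16 t) p * ((X1 (v16 t) p) ^ 2 + (X2 (v16 t) p) ^ 2)
        - (X1 (X1 (v16 t)) p * (X1 (v16 t) p) ^ 2
          + (X1 (X2 (v16 t)) p + X2 (X1 (v16 t)) p) * X1 (v16 t) p * X2 (v16 t) p
          + X2 (X2 (v16 t)) p * (X2 (v16 t) p) ^ 2) := by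
  rw [deltaH, deriv_u16, X1_X1_v16, X2_X2_v16, X1_X2_v16, X2_X1_v16]
  ring

end U16

/-- `u16` satisfies `u_t·|∇_H u|² = Δ_H u·|∇_H u|² - ⟨(∇_H²u)* ∇_H u, ∇_H u⟩` everywhere;
hence, wherever `∇_H u ≠ 0`, it solves the level-set horizontal mean curvature flow
equation `u_t = |∇_H u| div_H(∇_H u / |∇_H u|)` classically. -/
theorem u16_solves_horizontal_mcf :
    (∀ p : Heis, ∀ t : ℝ,
      deriv (fun s : ℝ => u16 p s) t * ((X1 (v16 t) p) ^ 2 + (X2 (v16 t) p) ^ 2)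
        = deltaH (v16 t) p * ((X1 (v16 t) p) ^ 2 + (X2 (v16 t) p) ^ 2)
          - (X1 (X1 (v16 t)) p * (X1 (v16 t) p) ^ 2
            + (X1 (X2 (v16 t)) p + X2 (X1 (v16 t)) p) * X1 (v16 t) p * X2 (v16 t) p
            + X2 (X2 (v16 t)) p * (X2 (v16 t) p) ^ 2)) ∧
    (∀ p : Heis, ∀ t : ℝ, (X1 (v16 t) p, X2 (v16 t) p) ≠ (0, 0) →
      deriv (fun s : ℝ => u16 p s) t
        = gradNormH (v16 t) p
          * divH (fun q => X1 (v16 t) q / gradNormH (v16 t) q)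
              (fun q => X2 (v16 t) q / gradNormH (v16 t) q) p) := by
  refine ⟨u16_solves_mcf_nondivergence, fun p t hp => ?_⟩
  rw [gradNormH_mul_divH_normalized (by rw [X1_v16]; fun_prop) (by rw [X2_v16]; fun_prop) hp]
  have hG := (sq_add_sq_X1_X2_pos hp).ne'
  field_simp
  linear_combination u16_solves_mcf_nondivergence p t
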